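/- Let Σ be a d × d diagonal complex matrix with real diagonal entries σ_1 ≥ σ_2 ≥ … ≥ σ_d ≥ 0. Then the value Σ_{i=1}^{d} σ_i σ_{d+1-i} is the least element of the set { Tr √((Σ * U * Σ)ᴴ * (Σ * U * Σ)) : U ∈ Matrix.unitaryGroup (Fin d) ℂ }; the minimum is attained when U is the antidiagonal permutation matrix, which pairs the largest Schmidt coefficients with the smallest. -/

import Mathlib

/-!
For every unitary `W`, `Re Tr (W X) ≤ Tr |X|`: in an orthonormal eigenbasis of `Xᴴ X` this is
Cauchy–Schwarz column by column. With `X = Σ U Σ` and `W = Uᴴ` the left side is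
`∑ i j, σᵢ σⱼ |Uᵢⱼ|²`, a linear function of the doubly stochastic matrix `(|Uᵢⱼ|²)`; by Birkhoff's
theorem it is minimised at a permutation, and by the rearrangement inequality the best permutation
pairs `σᵢ` with `σ_{d+1-i}`. Conversely, for the antidiagonal permutation `R`,
`Σ R Σ = R · diag (σ_{d+1-i} σᵢ)` is a polar decomposition, so its trace norm is exactly
`∑ σᵢ σ_{d+1-i}`.
-/

open Matrix ComplexOrder

/-- The square root of a positive semidefinite matrix, as defined in Mathlib before its removal. -/
noncomputable def Matrix.PosSemidef.sqrt {n 𝕜 : Type*} [Fintype n] [DecidableEq n] [RCLike 𝕜]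
    {A : Matrix n n 𝕜} (hA : A.PosSemidef) : Matrix n n 𝕜 :=
  hA.1.eigenvectorUnitary.1 * diagonal ((↑) ∘ (√·) ∘ hA.1.eigenvalues) *
    (star hA.1.eigenvectorUnitary : Matrix n n 𝕜)

namespace Matrix

variable {m n 𝕜 : Type*} [RCLike 𝕜]

lemma sum_norm_sq_apply_eq_re_conjTranspose_mul_self [Fintype m] (A : Matrix m n 𝕜) (j : n) :
    ∑ i, ‖A i j‖ ^ 2 = RCLike.re ((Aᴴ * A) j j) := by
  simp [mul_apply, RCLike.conj_mul]

lemma re_trace_conjTranspose_mul_le [Fintype m] [Fintype n] (A B : Matrix m n 𝕜) :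
    RCLike.re (Aᴴ * B).trace ≤
      ∑ j, √(RCLike.re ((Aᴴ * A) j j)) * √(RCLike.re ((Bᴴ * B) j j)) := by
  simp_rw [← sum_norm_sq_apply_eq_re_conjTranspose_mul_self]
  simp only [trace, diag_apply, mul_apply, conjTranspose_apply, map_sum]
  gcongr with j
  calc ∑ i, RCLike.re (star (A i j) * B i j) ≤ ∑ i, ‖A i j‖ * ‖B i j‖ :=
        Finset.sum_le_sum fun i _ => (RCLike.re_le_norm _).trans (by simp)
    _ ≤ _ := Real.sum_mul_le_sqrt_mul_sqrt _ _ _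

variable [Fintype n] [DecidableEq n]

lemma PosSemidef.trace_sqrt {A : Matrix n n 𝕜} (hA : A.PosSemidef) :
    hA.sqrt.trace = ∑ i, ((√(hA.1.eigenvalues i) : ℝ) : 𝕜) := by
  rw [PosSemidef.sqrt, trace_mul_cycle, Unitary.coe_star_mul_self, one_mul, trace_diagonal]
  rfl

/-- With `P` an eigenvector unitary of `Xᴴ X`, apply `re_trace_conjTranspose_mul_le` to `Wᴴ P`,
whose columns are unit vectors, and `X P`, whose `j`-th column has squared norm the `j`-th
eigenvalue. -/
lemma re_trace_mul_le_re_trace_sqrt {W : Matrix n n 𝕜} (hW : W ∈ unitaryGroup n 𝕜)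
    (X : Matrix n n 𝕜) :
    RCLike.re (W * X).trace ≤ RCLike.re (posSemidef_conjTranspose_mul_self X).sqrt.trace := by
  set hH := posSemidef_conjTranspose_mul_self X
  set P : Matrix n n 𝕜 := (hH.1.eigenvectorUnitary : Matrix n n 𝕜)
  have hP : P ∈ unitaryGroup n 𝕜 := hH.1.eigenvectorUnitary.2
  have hA : (Wᴴ * P)ᴴ * (Wᴴ * P) = 1 := by
    have hWW : W * Wᴴ = 1 := mem_unitaryGroup_iff.mp hW
    have hPP : Pᴴ * P = 1 := mem_unitaryGroup_iff'.mp hP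
    rw [conjTranspose_mul, conjTranspose_conjTranspose, Matrix.mul_assoc, ← Matrix.mul_assoc W,
      hWW, Matrix.one_mul, hPP]
  have hB : (X * P)ᴴ * (X * P) = diagonal (RCLike.ofReal ∘ hH.1.eigenvalues) := by
    rw [← hH.1.conjStarAlgAut_star_eigenvectorUnitary, Unitary.conjStarAlgAut_star_apply,
      conjTranspose_mul, Matrix.mul_assoc, ← Matrix.mul_assoc Xᴴ, ← Matrix.mul_assoc]
    rfl
  have htrace : ((Wᴴ * P)ᴴ * (X * P)).trace = (W * X).trace := by
    rw [conjTranspose_mul, conjTranspose_conjTranspose, Matrix.mul_assoc, trace_mul_comm,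
      Matrix.mul_assoc, Matrix.mul_assoc, ← star_eq_conjTranspose, mem_unitaryGroup_iff.mp hP,
      Matrix.mul_one]
  calc RCLike.re (W * X).trace
      ≤ ∑ j, √(RCLike.re (((Wᴴ * P)ᴴ * (Wᴴ * P)) j j)) *
          √(RCLike.re (((X * P)ᴴ * (X * P)) j j)) :=
        htrace ▸ re_trace_conjTranspose_mul_le _ _
    _ = RCLike.re hH.sqrt.trace := by simp [hA, hB, hH.trace_sqrt, - conjTranspose_mul]

open scoped MatrixOrder in
/-- `hB.sqrt` is the continuous functional calculus square root, whose uniqueness Mathlib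
provides. -/
lemma PosSemidef.sqrt_eq_of_sq_eq {A B : Matrix n n 𝕜} (hA : A.PosSemidef) (hB : B.PosSemidef)
    (hAB : A ^ 2 = B) : hB.sqrt = A := by
  have h_cfc : hB.sqrt = cfc Real.sqrt B := by
    rw [hB.1.cfc_eq]
    simp [IsHermitian.cfc, Unitary.conjStarAlgAut_apply, PosSemidef.sqrt, Function.comp_def]
  rw [h_cfc, ← cfcₙ_eq_cfc (f := Real.sqrt) Real.continuous_sqrt.continuousOn Real.sqrt_zero,
    ← CFC.sqrt_eq_real_sqrt B hB.nonneg]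
  exact CFC.sqrt_unique (by rw [← pow_two, hAB]) hA.nonneg

lemma PosSemidef.sqrt_conjTranspose_mul_self_unitary_mul {U B : Matrix n n 𝕜}
    (hU : U ∈ unitaryGroup n 𝕜) (hB : B.PosSemidef) :
    (posSemidef_conjTranspose_mul_self (U * B)).sqrt = B := by
  refine PosSemidef.sqrt_eq_of_sq_eq hB _ ?_
  have hUU : Uᴴ * U = 1 := mem_unitaryGroup_iff'.mp hU
  rw [conjTranspose_mul, hB.1.eq, Matrix.mul_assoc, ← Matrix.mul_assoc Uᴴ, hUU, Matrix.one_mul,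
    pow_two]

lemma of_norm_sq_mem_doublyStochastic {U : Matrix n n 𝕜} (hU : U ∈ unitaryGroup n 𝕜) :
    of (fun i j => ‖U i j‖ ^ 2) ∈ doublyStochastic ℝ n := by
  refine mem_doublyStochastic_iff_sum.mpr ⟨fun i j => sq_nonneg _, fun i => ?_, fun j => ?_⟩
  · have hUU : U * Uᴴ = 1 := mem_unitaryGroup_iff.mp hU
    simpa [hUU] using sum_norm_sq_apply_eq_re_conjTranspose_mul_self Uᴴ i
  · have hUU : Uᴴ * U = 1 := mem_unitaryGroup_iff'.mp hU
    simpa [hUU] using sum_norm_sq_apply_eq_re_conjTranspose_mul_self U j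

lemma re_trace_conjTranspose_mul_diagonal_mul_mul_diagonal (U : Matrix n n 𝕜) (a b : n → ℝ) :
    RCLike.re (Uᴴ * (diagonal (fun i => (a i : 𝕜)) * U * diagonal (fun i => (b i : 𝕜)))).trace =
      ∑ i, ∑ j, a i * b j * ‖U i j‖ ^ 2 := by
  have hterm (z : 𝕜) (x y : ℝ) : RCLike.re (star z * (x * z * y)) = x * y * ‖z‖ ^ 2 := by
    rw [show star z * (x * z * y) = x * y * (starRingEnd 𝕜 z * z) by rw [RCLike.star_def]; ring,
      RCLike.conj_mul, ← RCLike.ofReal_pow, ← RCLike.ofReal_mul, ← RCLike.ofReal_mul,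
      RCLike.ofReal_re]
  simp only [trace, diag_apply, mul_apply (M := Uᴴ), conjTranspose_apply, mul_diagonal,
    diagonal_mul, map_sum, hterm]
  exact Finset.sum_comm

lemma diagonal_mul_permMatrix {R : Type*} [Semiring R] (π : Equiv.Perm n) (v : n → R) :
    diagonal v * π.permMatrix R = π.permMatrix R * diagonal (v ∘ π.symm) := by
  ext i j
  by_cases h : π i = j
  · subst h
    simp [Equiv.toPEquiv_apply, PEquiv.toMatrix_apply]
  · simp [Equiv.toPEquiv_apply, PEquiv.toMatrix_apply, h]

lemma le_sum_mul_of_mem_doublyStochastic {R : Type*} [Field R] [LinearOrder R]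
    [IsStrictOrderedRing R] {M : Matrix n n R} (hM : M ∈ doublyStochastic R n) (f : n → n → R)
    {c : R} (hc : ∀ π : Equiv.Perm n, c ≤ ∑ i, f i (π i)) :
    c ≤ ∑ i, ∑ j, f i j * M i j := by
  obtain ⟨w, hw0, hw1, hwM⟩ := exists_eq_sum_perm_of_mem_doublyStochastic hM
  have hperm (π : Equiv.Perm n) : ∑ i, ∑ j, f i j * π.permMatrix R i j = ∑ i, f i (π i) := by
    simp [Equiv.toPEquiv_apply, PEquiv.toMatrix_apply]
  calc c = ∑ π, w π * c := by rw [← Finset.sum_mul, hw1, one_mul]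
    _ ≤ ∑ π, w π * ∑ i, f i (π i) := by gcongr with π; exacts [hw0 π, hc π]
    _ = ∑ i, ∑ j, f i j * M i j := by
      simp only [← hwM, ← hperm, sum_apply, smul_apply, smul_eq_mul, Finset.mul_sum]
      rw [Finset.sum_comm]
      refine Finset.sum_congr rfl fun i _ => ?_
      rw [Finset.sum_comm]
      exact Finset.sum_congr rfl fun j _ => Finset.sum_congr rfl fun π _ => by ring

end Matrix

lemma Antitone.sum_mul_rev_le_sum_mul_perm {α : Type*} [CommSemiring α] [LinearOrder α]
    [IsStrictOrderedRing α] [ExistsAddOfLE α] {d : ℕ} {σ : Fin d → α} (hσ : Antitone σ)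
    (π : Equiv.Perm (Fin d)) :
    ∑ i, σ i * σ i.rev ≤ ∑ i, σ i * σ (π i) := by
  have h := ((hσ.comp Fin.rev_anti).antivary hσ).sum_mul_le_sum_comp_perm_mul
    (σ := π.trans Fin.revPerm)
  simpa [mul_comm] using h

lemma Equiv.Perm.permMatrix_mem_unitaryGroup {n 𝕜 : Type*} [Fintype n] [DecidableEq n]
    [RCLike 𝕜] (π : Equiv.Perm n) : π.permMatrix 𝕜 ∈ unitaryGroup n 𝕜 := by
  rw [mem_unitaryGroup_iff', star_eq_conjTranspose, conjTranspose_permMatrix, ← permMatrix_mul,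
    mul_inv_cancel, permMatrix_one]

lemma Matrix.sum_mul_rev_le_re_trace_conjTranspose_mul {d : ℕ} {𝕜 : Type*} [RCLike 𝕜]
    {σ : Fin d → ℝ} (hσ : Antitone σ) {U : Matrix (Fin d) (Fin d) 𝕜}
    (hU : U ∈ unitaryGroup (Fin d) 𝕜) :
    ∑ i, σ i * σ i.rev ≤
      RCLike.re (Uᴴ * (diagonal (fun i => (σ i : 𝕜)) * U * diagonal (fun i => (σ i : 𝕜)))).trace := by
  rw [re_trace_conjTranspose_mul_diagonal_mul_mul_diagonal]
  exact le_sum_mul_of_mem_doublyStochastic (of_norm_sq_mem_doublyStochastic hU)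
    (fun i j => σ i * σ j) hσ.sum_mul_rev_le_sum_mul_perm

/-- For a Schmidt matrix `S = diagonal σ` with `σ` nonincreasing and
nonnegative, the value `∑ i, σ_i σ_{d+1-i}` is the least value of the trace norm
`Tr √((S U S)ᴴ (S U S)) = Tr|S U S|` over unitary `U`; the minimum is attained by the
antidiagonal permutation matrix, pairing largest with smallest Schmidt coefficients. -/
theorem minimum_fidelity_isLeast
    {d : ℕ} (σ : Fin d → ℝ) (hmono : Antitone σ) (hσ : ∀ i, 0 ≤ σ i)
    (S : Matrix (Fin d) (Fin d) ℂ) (hS : S = Matrix.diagonal (fun i => (σ i : ℂ))) :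
    IsLeast
      {r : ℝ | ∃ U ∈ Matrix.unitaryGroup (Fin d) ℂ,
        r = (Matrix.trace
          ((Matrix.posSemidef_conjTranspose_mul_self (S * U * S)).sqrt)).re}
      (∑ i : Fin d, σ i * σ i.rev) := by
  subst hS
  set R : Matrix (Fin d) (Fin d) ℂ := Fin.revPerm.permMatrix ℂ
  have hR : R ∈ unitaryGroup (Fin d) ℂ := Fin.revPerm.permMatrix_mem_unitaryGroup
  have hB : (diagonal fun i => ((σ i.rev * σ i : ℝ) : ℂ)).PosSemidef :=
    posSemidef_diagonal_iff.mpr fun i => Complex.zero_le_real.mpr (mul_nonneg (hσ _) (hσ _))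
  have hpolar : diagonal (fun i => (σ i : ℂ)) * R * diagonal (fun i => (σ i : ℂ)) =
      R * diagonal fun i => ((σ i.rev * σ i : ℝ) : ℂ) := by
    rw [diagonal_mul_permMatrix, Matrix.mul_assoc, diagonal_mul_diagonal]
    simp [R]
  refine ⟨⟨R, hR, ?_⟩, ?_⟩
  · rw [hpolar, PosSemidef.sqrt_conjTranspose_mul_self_unitary_mul hR hB, trace_diagonal]
    simp [Complex.re_sum, mul_comm]
  · rintro _ ⟨U, hU, rfl⟩
    exact (sum_mul_rev_le_re_trace_conjTranspose_mul hmono hU).trans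
      (re_trace_mul_le_re_trace_sqrt (Unitary.star_mem hU) _)
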